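/- Let c₃₁, c₂₂, c₁₃, c₀₄ be real numbers and let f : ℝ² → ℝ be a C^∞ function whose 4th-order Taylor polynomial at the origin is y² + c₃₁x³y + c₂₂x²y² + c₁₃xy³ + c₀₄y⁴. Then the Hessian determinant H = f_xx·f_yy − f_xy² satisfies H(x,y) = 12c₃₁xy + 4c₂₂y² + o(‖(x,y)‖²) as (x,y) → (0,0), and the quadratic part 12c₃₁xy + 4c₂₂y² is a nondegenerate (indefinite) quadratic form if and only if c₃₁ ≠ 0 (its discriminant equals 144c₃₁²). Hence for the class Π^p_{v,3}, with normal form y² + x⁵ + y·(φ₃ + φ₄), the parabolic curve has a Morse singularity at the origin precisely when the coefficient c₃₁ of x³y is nonzero. -/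

import Mathlib

open Asymptotics

/-- Partial derivative in the first variable. -/
noncomputable def pdx (f : ℝ × ℝ → ℝ) : ℝ × ℝ → ℝ := fun P => deriv (fun s => f (s, P.2)) P.1

/-- Partial derivative in the second variable. -/
noncomputable def pdy (f : ℝ × ℝ → ℝ) : ℝ × ℝ → ℝ := fun P => deriv (fun t => f (P.1, t)) P.2

noncomputable def Dx (h : ℝ × ℝ → ℝ) : ℝ × ℝ → ℝ := fun P => fderiv ℝ h P (1, 0)
noncomputable def Dy (h : ℝ × ℝ → ℝ) : ℝ × ℝ → ℝ := fun P => fderiv ℝ h P (0, 1)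

lemma contDiff_Dv (v : ℝ × ℝ) (h : ℝ × ℝ → ℝ) (hh : ContDiff ℝ (⊤ : ℕ∞) h) :
    ContDiff ℝ (⊤ : ℕ∞) (fun P => fderiv ℝ h P v) := by
  exact (ContinuousLinearMap.apply ℝ ℝ v).contDiff.comp (hh.fderiv_right (by simp))

lemma Dx_smooth (h : ℝ × ℝ → ℝ) (hh : ContDiff ℝ (⊤ : ℕ∞) h) : ContDiff ℝ (⊤ : ℕ∞) (Dx h) :=
  contDiff_Dv _ h hh
lemma Dy_smooth (h : ℝ × ℝ → ℝ) (hh : ContDiff ℝ (⊤ : ℕ∞) h) : ContDiff ℝ (⊤ : ℕ∞) (Dy h) :=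
  contDiff_Dv _ h hh

lemma pdx_eq (h : ℝ × ℝ → ℝ) (hh : ContDiff ℝ (⊤ : ℕ∞) h) : pdx h = Dx h := by
  funext P
  have hc : HasDerivAt (fun s : ℝ => (s, P.2)) ((1 : ℝ), (0 : ℝ)) P.1 := by
    simpa using (hasDerivAt_id P.1).prodMk (hasDerivAt_const P.1 P.2)
  have := ((hh.differentiable (by simp) (P.1, P.2)).hasFDerivAt.comp_hasDerivAt P.1 hc)
  simpa [pdx, Dx, Function.comp_def] using this.deriv

lemma pdy_eq (h : ℝ × ℝ → ℝ) (hh : ContDiff ℝ (⊤ : ℕ∞) h) : pdy h = Dy h := by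
  funext P
  have hc : HasDerivAt (fun t : ℝ => (P.1, t)) ((0 : ℝ), (1 : ℝ)) P.2 := by
    simpa using (hasDerivAt_const P.2 P.1).prodMk (hasDerivAt_id P.2)
  have := ((hh.differentiable (by simp) (P.1, P.2)).hasFDerivAt.comp_hasDerivAt P.2 hc)
  simpa [pdy, Dy, Function.comp_def] using this.deriv

lemma Dv_comm (h : ℝ × ℝ → ℝ) (hh : ContDiff ℝ (⊤ : ℕ∞) h) (v w : ℝ × ℝ) :
    (fun P => fderiv ℝ (fun Q => fderiv ℝ h Q v) P w)
      = fun P => fderiv ℝ (fun Q => fderiv ℝ h Q w) P v := by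
  funext P
  have hd : DifferentiableAt ℝ (fderiv ℝ h) P :=
    ((hh.fderiv_right (m := (⊤ : ℕ∞)) (by simp)).differentiable (by simp)) P
  rw [fderiv_clm_apply hd (differentiableAt_const v),
      fderiv_clm_apply hd (differentiableAt_const w)]
  simp
  exact ((hh.contDiffAt).isSymmSndFDerivAt (by rw [minSmoothness_of_isRCLikeNormedField]; exact WithTop.coe_le_coe.mpr le_top)).eq w v

noncomputable def DDx (t : ℝ) (u : ℝ × ℝ → ℝ) : ℝ × ℝ → ℝ :=
  fun P => u (P.1 + t, P.2) - u P
noncomputable def DDy (t : ℝ) (u : ℝ × ℝ → ℝ) : ℝ × ℝ → ℝ :=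
  fun P => u (P.1, P.2 + t) - u P

lemma shiftx_smooth (t : ℝ) (u : ℝ × ℝ → ℝ) (hu : ContDiff ℝ (⊤ : ℕ∞) u) :
    ContDiff ℝ (⊤ : ℕ∞) (fun P : ℝ × ℝ => u (P.1 + t, P.2)) :=
  hu.comp ((contDiff_fst.add contDiff_const).prodMk contDiff_snd)

lemma shifty_smooth (t : ℝ) (u : ℝ × ℝ → ℝ) (hu : ContDiff ℝ (⊤ : ℕ∞) u) :
    ContDiff ℝ (⊤ : ℕ∞) (fun P : ℝ × ℝ => u (P.1, P.2 + t)) :=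
  hu.comp (contDiff_fst.prodMk (contDiff_snd.add contDiff_const))

lemma DDx_smooth (t : ℝ) (u : ℝ × ℝ → ℝ) (hu : ContDiff ℝ (⊤ : ℕ∞) u) :
    ContDiff ℝ (⊤ : ℕ∞) (DDx t u) := (shiftx_smooth t u hu).sub hu

lemma DDy_smooth (t : ℝ) (u : ℝ × ℝ → ℝ) (hu : ContDiff ℝ (⊤ : ℕ∞) u) :
    ContDiff ℝ (⊤ : ℕ∞) (DDy t u) := (shifty_smooth t u hu).sub hu

lemma DDx_iter_smooth (t : ℝ) (i : ℕ) (u : ℝ × ℝ → ℝ) (hu : ContDiff ℝ (⊤ : ℕ∞) u) :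
    ContDiff ℝ (⊤ : ℕ∞) ((DDx t)^[i] u) := by
  induction i generalizing u with
  | zero => exact hu
  | succ i ih =>
    rw [Function.iterate_succ_apply]
    exact ih _ (DDx_smooth t u hu)

lemma Dx_iter_smooth (i : ℕ) (u : ℝ × ℝ → ℝ) (hu : ContDiff ℝ (⊤ : ℕ∞) u) :
    ContDiff ℝ (⊤ : ℕ∞) (Dx^[i] u) := by
  induction i generalizing u with
  | zero => exact hu
  | succ i ih =>
    rw [Function.iterate_succ_apply]
    exact ih _ (Dx_smooth u hu)

lemma Dy_iter_smooth (j : ℕ) (u : ℝ × ℝ → ℝ) (hu : ContDiff ℝ (⊤ : ℕ∞) u) :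
    ContDiff ℝ (⊤ : ℕ∞) (Dy^[j] u) := by
  induction j generalizing u with
  | zero => exact hu
  | succ j ih =>
    rw [Function.iterate_succ_apply]
    exact ih _ (Dy_smooth u hu)

lemma hasDerivAt_sliceX (u : ℝ × ℝ → ℝ) (hu : ContDiff ℝ (⊤ : ℕ∞) u) (x y : ℝ) :
    HasDerivAt (fun s => u (s, y)) (Dx u (x, y)) x := by
  have hc : HasDerivAt (fun s : ℝ => (s, y)) ((1 : ℝ), (0 : ℝ)) x := by
    simpa using (hasDerivAt_id x).prodMk (hasDerivAt_const x y)
  exact (hu.differentiable (by simp) (x, y)).hasFDerivAt.comp_hasDerivAt x hc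

lemma hasDerivAt_sliceY (u : ℝ × ℝ → ℝ) (hu : ContDiff ℝ (⊤ : ℕ∞) u) (x y : ℝ) :
    HasDerivAt (fun s => u (x, s)) (Dy u (x, y)) y := by
  have hc : HasDerivAt (fun s : ℝ => (x, s)) ((0 : ℝ), (1 : ℝ)) y := by
    simpa using (hasDerivAt_const y x).prodMk (hasDerivAt_id y)
  exact (hu.differentiable (by simp) (x, y)).hasFDerivAt.comp_hasDerivAt y hc

lemma fderiv_shift (u : ℝ × ℝ → ℝ) (hu : ContDiff ℝ (⊤ : ℕ∞) u) (c P v : ℝ × ℝ) :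
    fderiv ℝ (fun Q => u (Q + c)) P v = fderiv ℝ u (P + c) v := by
  have h1 : HasFDerivAt (fun Q : ℝ × ℝ => Q + c)
      (ContinuousLinearMap.id ℝ (ℝ × ℝ)) P := by
    simpa using (hasFDerivAt_id P).add_const c
  have h2 := ((hu.differentiable (by simp) (P + c)).hasFDerivAt).comp P h1
  have h3 : HasFDerivAt (fun Q : ℝ × ℝ => u (Q + c))
      ((fderiv ℝ u (P + c)).comp (ContinuousLinearMap.id ℝ (ℝ × ℝ))) P := h2
  rw [h3.fderiv]
  simp

lemma shift_smooth (c : ℝ × ℝ) (u : ℝ × ℝ → ℝ) (hu : ContDiff ℝ (⊤ : ℕ∞) u) :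
    ContDiff ℝ (⊤ : ℕ∞) (fun Q : ℝ × ℝ => u (Q + c)) :=
  hu.comp (contDiff_id.add contDiff_const)

lemma Dv_DDx_comm (t : ℝ) (v : ℝ × ℝ) (u : ℝ × ℝ → ℝ) (hu : ContDiff ℝ (⊤ : ℕ∞) u) :
    (fun P => fderiv ℝ (DDx t u) P v) = DDx t (fun P => fderiv ℝ u P v) := by
  funext P
  have e : DDx t u = fun Q : ℝ × ℝ => u (Q + (t, 0)) - u Q := by
    funext Q
    have : Q + ((t : ℝ), (0 : ℝ)) = (Q.1 + t, Q.2) := by ext <;> simp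
    rw [DDx, this]
  have d1 : DifferentiableAt ℝ (fun Q : ℝ × ℝ => u (Q + (t, 0))) P :=
    (shift_smooth (t, 0) u hu).differentiable (by simp) P
  have d2 : DifferentiableAt ℝ u P := hu.differentiable (by simp) P
  rw [e, fderiv_fun_sub d1 d2]
  have := fderiv_shift u hu (t, 0) P v
  have hp : P + ((t : ℝ), (0 : ℝ)) = (P.1 + t, P.2) := by ext <;> simp
  simp only [ContinuousLinearMap.sub_apply, this, DDx, hp]

lemma Dv_DDy_comm (t : ℝ) (v : ℝ × ℝ) (u : ℝ × ℝ → ℝ) (hu : ContDiff ℝ (⊤ : ℕ∞) u) :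
    (fun P => fderiv ℝ (DDy t u) P v) = DDy t (fun P => fderiv ℝ u P v) := by
  funext P
  have e : DDy t u = fun Q : ℝ × ℝ => u (Q + (0, t)) - u Q := by
    funext Q
    have : Q + ((0 : ℝ), (t : ℝ)) = (Q.1, Q.2 + t) := by ext <;> simp
    rw [DDy, this]
  have d1 : DifferentiableAt ℝ (fun Q : ℝ × ℝ => u (Q + (0, t))) P :=
    (shift_smooth (0, t) u hu).differentiable (by simp) P
  have d2 : DifferentiableAt ℝ u P := hu.differentiable (by simp) P
  rw [e, fderiv_fun_sub d1 d2]
  have := fderiv_shift u hu (0, t) P v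
  have hp : P + ((0 : ℝ), (t : ℝ)) = (P.1, P.2 + t) := by ext <;> simp
  simp only [ContinuousLinearMap.sub_apply, this, DDy, hp]

lemma Dx_DDx_comm (t : ℝ) (u : ℝ × ℝ → ℝ) (hu : ContDiff ℝ (⊤ : ℕ∞) u) :
    Dx (DDx t u) = DDx t (Dx u) := Dv_DDx_comm t (1, 0) u hu
lemma Dy_DDx_comm (t : ℝ) (u : ℝ × ℝ → ℝ) (hu : ContDiff ℝ (⊤ : ℕ∞) u) :
    Dy (DDx t u) = DDx t (Dy u) := Dv_DDx_comm t (0, 1) u hu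
lemma Dy_DDy_comm (t : ℝ) (u : ℝ × ℝ → ℝ) (hu : ContDiff ℝ (⊤ : ℕ∞) u) :
    Dy (DDy t u) = DDy t (Dy u) := Dv_DDy_comm t (0, 1) u hu

lemma Dx_iter_DDx_comm (t : ℝ) (i : ℕ) (u : ℝ × ℝ → ℝ) (hu : ContDiff ℝ (⊤ : ℕ∞) u) :
    Dx^[i] (DDx t u) = DDx t (Dx^[i] u) := by
  induction i generalizing u with
  | zero => rfl
  | succ i ih =>
    rw [Function.iterate_succ_apply, Function.iterate_succ_apply,
      Dx_DDx_comm t u hu, ih _ (Dx_smooth u hu)]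

lemma Dy_iter_DDy_comm (t : ℝ) (j : ℕ) (u : ℝ × ℝ → ℝ) (hu : ContDiff ℝ (⊤ : ℕ∞) u) :
    Dy^[j] (DDy t u) = DDy t (Dy^[j] u) := by
  induction j generalizing u with
  | zero => rfl
  | succ j ih =>
    rw [Function.iterate_succ_apply, Function.iterate_succ_apply,
      Dy_DDy_comm t u hu, ih _ (Dy_smooth u hu)]

lemma Dy_iter_DDx_comm (t : ℝ) (j : ℕ) (u : ℝ × ℝ → ℝ) (hu : ContDiff ℝ (⊤ : ℕ∞) u) :
    Dy^[j] (DDx t u) = DDx t (Dy^[j] u) := by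
  induction j generalizing u with
  | zero => rfl
  | succ j ih =>
    rw [Function.iterate_succ_apply, Function.iterate_succ_apply,
      Dy_DDx_comm t u hu, ih _ (Dy_smooth u hu)]

lemma Dy_iter_DDx_iter_comm (t : ℝ) (i j : ℕ) (u : ℝ × ℝ → ℝ) (hu : ContDiff ℝ (⊤ : ℕ∞) u) :
    Dy^[j] ((DDx t)^[i] u) = (DDx t)^[i] (Dy^[j] u) := by
  induction i generalizing u with
  | zero => rfl
  | succ i ih =>
    rw [Function.iterate_succ_apply, Function.iterate_succ_apply,
      ih _ (DDx_smooth t u hu), Dy_iter_DDx_comm t j u hu]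

lemma Dy_Dx_swap (u : ℝ × ℝ → ℝ) (hu : ContDiff ℝ (⊤ : ℕ∞) u) :
    Dy (Dx u) = Dx (Dy u) := by
  have := Dv_comm u hu (1, 0) (0, 1)
  have h2 : Dy (Dx u) = fun P => fderiv ℝ (fun Q => fderiv ℝ u Q (1, 0)) P (0, 1) := rfl
  have h3 : Dx (Dy u) = fun P => fderiv ℝ (fun Q => fderiv ℝ u Q (0, 1)) P (1, 0) := rfl
  rw [h2, h3, this]

lemma Dy_iter_Dx_swap (j : ℕ) (u : ℝ × ℝ → ℝ) (hu : ContDiff ℝ (⊤ : ℕ∞) u) :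
    Dy^[j] (Dx u) = Dx (Dy^[j] u) := by
  induction j generalizing u with
  | zero => rfl
  | succ j ih =>
    rw [Function.iterate_succ_apply, Dy_Dx_swap u hu, ih _ (Dy_smooth u hu),
      Function.iterate_succ_apply]

lemma I1 (t : ℝ) (ht : 0 < t) (i : ℕ) (u : ℝ × ℝ → ℝ) (hu : ContDiff ℝ (⊤ : ℕ∞) u)
    (P : ℝ × ℝ) :
    ∃ ξ ∈ Set.Icc P.1 (P.1 + i * t),
      ((DDx t)^[i] u) P = t ^ i * (Dx^[i] u) (ξ, P.2) := by
  induction i generalizing u with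
  | zero =>
    exact ⟨P.1, by simp, by simp⟩
  | succ i ih =>
    obtain ⟨ξ, hξ, hval⟩ := ih (DDx t u) (DDx_smooth t u hu)
    rw [Dx_iter_DDx_comm t i u hu] at hval
    have hcont : ContinuousOn (fun s => (Dx^[i] u) (s, P.2)) (Set.Icc ξ (ξ + t)) :=
      (((Dx_iter_smooth i u hu).continuous).comp
        (continuous_id.prodMk continuous_const)).continuousOn
    obtain ⟨ζ, hζ, hslope⟩ := exists_hasDerivAt_eq_slope
      (fun s => (Dx^[i] u) (s, P.2)) (fun s => (Dx (Dx^[i] u)) (s, P.2))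
      (by linarith : ξ < ξ + t) hcont
      (fun s _ => hasDerivAt_sliceX (Dx^[i] u) (Dx_iter_smooth i u hu) s P.2)
    refine ⟨ζ, ⟨?_, ?_⟩, ?_⟩
    · have := hξ.1; have := hζ.1; linarith
    · have := hξ.2; have := hζ.2; push_cast; linarith
    · have hdiff : (Dx^[i] u) (ξ + t, P.2) - (Dx^[i] u) (ξ, P.2)
          = t * (Dx (Dx^[i] u)) (ζ, P.2) := by
        rw [add_sub_cancel_left, eq_div_iff ht.ne'] at hslope
        linarith [hslope]
      calc ((DDx t)^[i+1] u) P = ((DDx t)^[i] (DDx t u)) P := by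
              rw [Function.iterate_succ_apply]
        _ = t ^ i * (DDx t (Dx^[i] u)) (ξ, P.2) := hval
        _ = t ^ i * ((Dx^[i] u) (ξ + t, P.2) - (Dx^[i] u) (ξ, P.2)) := rfl
        _ = t ^ (i+1) * (Dx (Dx^[i] u)) (ζ, P.2) := by rw [hdiff]; ring
        _ = t ^ (i+1) * (Dx^[i+1] u) (ζ, P.2) := by
              rw [Function.iterate_succ_apply']

lemma I2 (t : ℝ) (ht : 0 < t) (j : ℕ) (u : ℝ × ℝ → ℝ) (hu : ContDiff ℝ (⊤ : ℕ∞) u)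
    (P : ℝ × ℝ) :
    ∃ η ∈ Set.Icc P.2 (P.2 + j * t),
      ((DDy t)^[j] u) P = t ^ j * (Dy^[j] u) (P.1, η) := by
  induction j generalizing u with
  | zero =>
    exact ⟨P.2, by simp, by simp⟩
  | succ j ih =>
    obtain ⟨η, hη, hval⟩ := ih (DDy t u) (DDy_smooth t u hu)
    rw [Dy_iter_DDy_comm t j u hu] at hval
    have hcont : ContinuousOn (fun s => (Dy^[j] u) (P.1, s)) (Set.Icc η (η + t)) :=
      (((Dy_iter_smooth j u hu).continuous).comp
        (continuous_const.prodMk continuous_id)).continuousOn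
    obtain ⟨ζ, hζ, hslope⟩ := exists_hasDerivAt_eq_slope
      (fun s => (Dy^[j] u) (P.1, s)) (fun s => (Dy (Dy^[j] u)) (P.1, s))
      (by linarith : η < η + t) hcont
      (fun s _ => hasDerivAt_sliceY (Dy^[j] u) (Dy_iter_smooth j u hu) P.1 s)
    refine ⟨ζ, ⟨?_, ?_⟩, ?_⟩
    · have := hη.1; have := hζ.1; linarith
    · have := hη.2; have := hζ.2; push_cast; linarith
    · have hdiff : (Dy^[j] u) (P.1, η + t) - (Dy^[j] u) (P.1, η)
          = t * (Dy (Dy^[j] u)) (P.1, ζ) := by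
        rw [add_sub_cancel_left, eq_div_iff ht.ne'] at hslope
        linarith [hslope]
      calc ((DDy t)^[j+1] u) P = ((DDy t)^[j] (DDy t u)) P := by
              rw [Function.iterate_succ_apply]
        _ = t ^ j * (DDy t (Dy^[j] u)) (P.1, η) := hval
        _ = t ^ j * ((Dy^[j] u) (P.1, η + t) - (Dy^[j] u) (P.1, η)) := rfl
        _ = t ^ (j+1) * (Dy (Dy^[j] u)) (P.1, ζ) := by rw [hdiff]; ring
        _ = t ^ (j+1) * (Dy^[j+1] u) (P.1, ζ) := by
              rw [Function.iterate_succ_apply']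

lemma Bx (t : ℝ) (ht : 0 ≤ t) (i : ℕ) (u : ℝ × ℝ → ℝ) (M : ℝ) (P : ℝ × ℝ)
    (hb : ∀ s ∈ Set.Icc (0 : ℝ) (i * t), |u (P.1 + s, P.2)| ≤ M) :
    |((DDx t)^[i] u) P| ≤ 2 ^ i * M := by
  induction i generalizing u M with
  | zero =>
    have := hb 0 (by simp)
    simpa using this
  | succ i ih =>
    rw [Function.iterate_succ_apply]
    have h2 : ∀ s ∈ Set.Icc (0 : ℝ) (i * t), |(DDx t u) (P.1 + s, P.2)| ≤ 2 * M := by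
      intro s hs
      have h1 : |u (P.1 + (s + t), P.2)| ≤ M := by
        apply hb
        constructor
        · linarith [hs.1]
        · push_cast; nlinarith [hs.2]
      have h0 : |u (P.1 + s, P.2)| ≤ M := by
        apply hb
        constructor
        · exact hs.1
        · push_cast; nlinarith [hs.2]
      have : (DDx t u) (P.1 + s, P.2) = u (P.1 + (s + t), P.2) - u (P.1 + s, P.2) := by
        simp [DDx]; ring_nf
      rw [this]
      calc |u (P.1 + (s + t), P.2) - u (P.1 + s, P.2)|
          ≤ |u (P.1 + (s + t), P.2)| + |u (P.1 + s, P.2)| := abs_sub _ _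
        _ ≤ 2 * M := by linarith
    have := ih (DDx t u) (2 * M) h2
    calc |((DDx t)^[i] (DDx t u)) P| ≤ 2 ^ i * (2 * M) := this
      _ = 2 ^ (i+1) * M := by ring

lemma By (t : ℝ) (ht : 0 ≤ t) (j : ℕ) (u : ℝ × ℝ → ℝ) (M : ℝ) (P : ℝ × ℝ)
    (hb : ∀ s ∈ Set.Icc (0 : ℝ) (j * t), |u (P.1, P.2 + s)| ≤ M) :
    |((DDy t)^[j] u) P| ≤ 2 ^ j * M := by
  induction j generalizing u M with
  | zero =>
    have := hb 0 (by simp)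
    simpa using this
  | succ j ih =>
    rw [Function.iterate_succ_apply]
    have h2 : ∀ s ∈ Set.Icc (0 : ℝ) (j * t), |(DDy t u) (P.1, P.2 + s)| ≤ 2 * M := by
      intro s hs
      have h1 : |u (P.1, P.2 + (s + t))| ≤ M := by
        apply hb
        constructor
        · linarith [hs.1]
        · push_cast; nlinarith [hs.2]
      have h0 : |u (P.1, P.2 + s)| ≤ M := by
        apply hb
        constructor
        · exact hs.1
        · push_cast; nlinarith [hs.2]
      have : (DDy t u) (P.1, P.2 + s) = u (P.1, P.2 + (s + t)) - u (P.1, P.2 + s) := by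
        simp [DDy]; ring_nf
      rw [this]
      calc |u (P.1, P.2 + (s + t)) - u (P.1, P.2 + s)|
          ≤ |u (P.1, P.2 + (s + t))| + |u (P.1, P.2 + s)| := abs_sub _ _
        _ ≤ 2 * M := by linarith
    have := ih (DDy t u) (2 * M) h2
    calc |((DDy t)^[j] (DDy t u)) P| ≤ 2 ^ j * (2 * M) := this
      _ = 2 ^ (j+1) * M := by ring

lemma abs_le_forall_eps (x C : ℝ) (hC : 0 < C) (hx : ∀ ε > 0, |x| ≤ C * ε) : x = 0 := by
  by_contra hne
  have hpos : 0 < |x| := abs_pos.mpr hne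
  have := hx (|x| / (2 * C)) (by positivity)
  have : |x| ≤ |x| / 2 := by
    calc |x| ≤ C * (|x| / (2 * C)) := this
      _ = |x| / 2 := by field_simp
  linarith

lemma Avanish (n : ℕ) (h : ℝ × ℝ → ℝ) (hh : ContDiff ℝ (⊤ : ℕ∞) h)
    (ho : h =o[nhds (0 : ℝ × ℝ)] (fun P : ℝ × ℝ => ‖P‖ ^ n)) :
    ∀ i j : ℕ, i + j ≤ n → (Dx^[i] (Dy^[j] h)) (0, 0) = 0 := by
  intro i j hij
  set pd := Dx^[i] (Dy^[j] h) with hpd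
  have hpds : ContDiff ℝ (⊤ : ℕ∞) pd := Dx_iter_smooth i _ (Dy_iter_smooth j h hh)
  set C : ℝ := 1 + 2 ^ n * (n : ℝ) ^ n with hC
  have hCpos : 0 < C := by positivity
  apply abs_le_forall_eps _ C hCpos
  intro ε hε
  -- continuity of pd at 0
  obtain ⟨δ₁, hδ₁pos, hδ₁⟩ := Metric.continuousAt_iff.mp (hpds.continuous.continuousAt : ContinuousAt pd ((0 : ℝ), (0 : ℝ))) ε hε
  -- littleO bound
  have := (isLittleO_iff.mp ho) hε
  obtain ⟨δ₂, hδ₂pos, hδ₂⟩ := Metric.eventually_nhds_iff.mp this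
  set m : ℝ := min 1 (min δ₁ δ₂) with hm
  have hmpos : 0 < m := by positivity
  set t : ℝ := m / (n + 1) with htdef
  have htpos : 0 < t := by positivity
  have ht1 : t ≤ 1 := by
    rw [htdef]
    calc m / (n + 1) ≤ m / 1 := by
          apply div_le_div_of_nonneg_left hmpos.le one_pos
          push_cast; linarith
      _ = m := div_one m
      _ ≤ 1 := min_le_left _ _
  have hnt : (n : ℝ) * t < m := by
    rw [htdef]
    rw [div_eq_mul_inv]
    have h1 : (n : ℝ) * (m * ((n : ℝ) + 1)⁻¹) = m * ((n : ℝ) * ((n : ℝ) + 1)⁻¹) := by ring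
    rw [h1]
    have h2 : (n : ℝ) * ((n : ℝ) + 1)⁻¹ < 1 := by
      rw [mul_inv_lt_iff₀ (by positivity)]
      linarith
    nlinarith
  have hntnn : 0 ≤ (n : ℝ) * t := by positivity
  have hnt1 : (n : ℝ) * t < δ₁ := lt_of_lt_of_le hnt (le_trans (min_le_right _ _) (min_le_left _ _))
  have hnt2 : (n : ℝ) * t < δ₂ := lt_of_lt_of_le hnt (le_trans (min_le_right _ _) (min_le_right _ _))
  -- pointwise bound on h in the box
  set M0 : ℝ := ε * ((n : ℝ) * t) ^ n with hM0
  have hbox : ∀ Q : ℝ × ℝ, ‖Q‖ ≤ (n : ℝ) * t → |h Q| ≤ M0 := by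
    intro Q hQ
    have hd : dist Q (0 : ℝ × ℝ) < δ₂ := by
      rw [dist_zero_right]; exact lt_of_le_of_lt hQ hnt2
    have := hδ₂ hd
    calc |h Q| ≤ ε * ‖‖Q‖ ^ n‖ := this
      _ = ε * ‖Q‖ ^ n := by rw [Real.norm_eq_abs, abs_of_nonneg (by positivity)]
      _ ≤ M0 := by
          rw [hM0]
          exact mul_le_mul_of_nonneg_left (pow_le_pow_left₀ (norm_nonneg Q) hQ n) hε.le
  -- the iterated difference value
  obtain ⟨η, hη, hV⟩ := I2 t htpos j ((DDx t)^[i] h) (DDx_iter_smooth t i h hh) (0, 0)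
  simp only at hη hV
  rw [Dy_iter_DDx_iter_comm t i j h hh] at hV
  obtain ⟨ξ, hξ, hV2⟩ := I1 t htpos i (Dy^[j] h) (Dy_iter_smooth j h hh) (0, η)
  simp only at hξ hV2
  -- bounds on the box coordinates
  have hξ0 : 0 ≤ ξ := by simpa using hξ.1
  have hξn : ξ ≤ (n : ℝ) * t := by
    have := hξ.2
    simp only [zero_add] at this
    calc ξ ≤ (i : ℝ) * t := this
      _ ≤ (n : ℝ) * t := by
          apply mul_le_mul_of_nonneg_right _ htpos.le
          exact_mod_cast Nat.le_of_lt_succ (Nat.lt_succ_of_le (le_trans (Nat.le_add_right i j) hij))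
  have hη0 : 0 ≤ η := by simpa using hη.1
  have hηn : η ≤ (n : ℝ) * t := by
    have := hη.2
    simp only [zero_add] at this
    calc η ≤ (j : ℝ) * t := this
      _ ≤ (n : ℝ) * t := by
          apply mul_le_mul_of_nonneg_right _ htpos.le
          exact_mod_cast (le_trans (Nat.le_add_left j i) hij)
  -- bound |V| using Bx, By
  have hVbound : |((DDy t)^[j] ((DDx t)^[i] h)) (0, 0)| ≤ 2 ^ j * (2 ^ i * M0) := by
    apply By t htpos.le j _ _ (0, 0)
    intro s hs
    have hsn : s ≤ (n : ℝ) * t := by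
      rcases hs with ⟨hs0, hsj⟩
      calc s ≤ (j : ℝ) * t := hsj
        _ ≤ (n : ℝ) * t := by
            apply mul_le_mul_of_nonneg_right _ htpos.le
            exact_mod_cast (le_trans (Nat.le_add_left j i) hij)
    apply Bx t htpos.le i h M0 ((0 : ℝ), (0 : ℝ) + s)
    intro r hr
    have hrn : r ≤ (n : ℝ) * t := by
      rcases hr with ⟨hr0, hri⟩
      calc r ≤ (i : ℝ) * t := hri
        _ ≤ (n : ℝ) * t := by
            apply mul_le_mul_of_nonneg_right _ htpos.le
            exact_mod_cast (le_trans (Nat.le_add_right i j) hij)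
    apply hbox
    rw [Prod.norm_def]
    simp only [zero_add, Real.norm_eq_abs]
    rcases hr with ⟨hr0, _⟩
    rcases hs with ⟨hs0, _⟩
    rw [abs_of_nonneg hr0, abs_of_nonneg hs0]
    exact max_le hrn hsn
  -- combine
  have hVval : ((DDy t)^[j] ((DDx t)^[i] h)) (0, 0) = t ^ (i + j) * pd (ξ, η) := by
    rw [hV, hV2, hpd]
    ring
  have hpdbound : |pd (ξ, η)| ≤ 2 ^ n * (n : ℝ) ^ n * ε := by
    have h1 : |pd (ξ, η)| * t ^ (i + j) ≤ 2 ^ (i + j) * M0 := by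
      have := hVbound
      rw [hVval] at this
      rw [abs_mul, abs_of_nonneg (by positivity : (0:ℝ) ≤ t ^ (i+j))] at this
      calc |pd (ξ, η)| * t ^ (i + j) = t ^ (i + j) * |pd (ξ, η)| := by ring
        _ ≤ 2 ^ j * (2 ^ i * M0) := this
        _ = 2 ^ (i + j) * M0 := by rw [pow_add]; ring
    have h2 : (2 : ℝ) ^ (i + j) * M0 ≤ 2 ^ n * (n : ℝ) ^ n * ε * t ^ (i + j) := by
      rw [hM0, mul_pow]
      have ht_le : t ^ n ≤ t ^ (i + j) := pow_le_pow_of_le_one htpos.le ht1 hij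
      have h2n : (2 : ℝ) ^ (i + j) ≤ 2 ^ n := pow_le_pow_right₀ (by norm_num) hij
      have hnn : (0 : ℝ) ≤ (n : ℝ) ^ n := by positivity
      have e1 : (2:ℝ) ^ (i+j) * (ε * ((n:ℝ) ^ n * t ^ n))
          ≤ (2:ℝ) ^ n * (ε * ((n:ℝ) ^ n * t ^ n)) := by
        apply mul_le_mul_of_nonneg_right h2n
        positivity
      have e2 : (2:ℝ) ^ n * (ε * ((n:ℝ) ^ n * t ^ n))
          ≤ (2:ℝ) ^ n * (ε * ((n:ℝ) ^ n * t ^ (i+j))) := by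
        apply mul_le_mul_of_nonneg_left _ (by positivity)
        apply mul_le_mul_of_nonneg_left _ hε.le
        exact mul_le_mul_of_nonneg_left ht_le hnn
      calc (2:ℝ) ^ (i+j) * (ε * ((n:ℝ) ^ n * t ^ n))
          ≤ (2:ℝ) ^ n * (ε * ((n:ℝ) ^ n * t ^ (i+j))) := le_trans e1 e2
        _ = 2 ^ n * (n : ℝ) ^ n * ε * t ^ (i + j) := by ring
    have h3 : |pd (ξ, η)| * t ^ (i + j) ≤ 2 ^ n * (n : ℝ) ^ n * ε * t ^ (i + j) :=
      le_trans h1 h2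
    have htp : (0 : ℝ) < t ^ (i + j) := by positivity
    exact le_of_mul_le_mul_right h3 htp
  -- continuity
  have hdist : dist ((ξ, η) : ℝ × ℝ) (0, 0) < δ₁ := by
    rw [Prod.dist_eq]
    simp only [Real.dist_eq, sub_zero]
    rw [abs_of_nonneg hξ0, abs_of_nonneg hη0]
    exact lt_of_le_of_lt (max_le hξn hηn) hnt1
  have hcont := hδ₁ hdist
  rw [Real.dist_eq] at hcont
  calc |pd (0, 0)| = |pd (0, 0) - pd (ξ, η) + pd (ξ, η)| := by ring_nf
    _ ≤ |pd (0, 0) - pd (ξ, η)| + |pd (ξ, η)| := abs_add_le _ _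
    _ ≤ ε + 2 ^ n * (n : ℝ) ^ n * ε := by
        have : |pd (0, 0) - pd (ξ, η)| = |pd (ξ, η) - pd (0, 0)| := abs_sub_comm _ _
        rw [this]
        exact add_le_add hcont.le hpdbound
    _ = C * ε := by rw [hC]; ring

lemma pd_Dx (i j : ℕ) (h : ℝ × ℝ → ℝ) (hh : ContDiff ℝ (⊤ : ℕ∞) h) :
    Dx^[i] (Dy^[j] (Dx h)) = Dx^[i+1] (Dy^[j] h) := by
  rw [Dy_iter_Dx_swap j h hh, Function.iterate_succ_apply]

lemma pd_Dy (i j : ℕ) (h : ℝ × ℝ → ℝ) :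
    Dx^[i] (Dy^[j] (Dy h)) = Dx^[i] (Dy^[j+1] h) := by
  rw [Function.iterate_succ_apply]

lemma zero_pair : ((0 : ℝ), (0 : ℝ)) = (0 : ℝ × ℝ) := rfl

lemma Bsmall : ∀ (n : ℕ) (h : ℝ × ℝ → ℝ), ContDiff ℝ (⊤ : ℕ∞) h →
    (∀ i j : ℕ, i + j ≤ n → (Dx^[i] (Dy^[j] h)) (0, 0) = 0) →
    h =o[nhds (0 : ℝ × ℝ)] (fun P : ℝ × ℝ => ‖P‖ ^ n) := by
  intro n
  induction n with
  | zero =>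
    intro h hh hz
    have h0 : h (0, 0) = 0 := hz 0 0 (le_refl 0)
    have : (fun P : ℝ × ℝ => ‖P‖ ^ (0 : ℕ)) = fun _ => (1 : ℝ) := by
      funext P; simp
    rw [this, isLittleO_one_iff]
    have := hh.continuous.continuousAt (x := (0 : ℝ × ℝ))
    rw [ContinuousAt, ← zero_pair, h0] at this
    exact this
  | succ n ih =>
    intro h hh hz
    have h0 : h (0, 0) = 0 := hz 0 0 (by omega)
    have hox : Dx h =o[nhds (0 : ℝ × ℝ)] (fun P : ℝ × ℝ => ‖P‖ ^ n) := by
      apply ih (Dx h) (Dx_smooth h hh)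
      intro i j hij
      rw [pd_Dx i j h hh]
      exact hz (i+1) j (by omega)
    have hoy : Dy h =o[nhds (0 : ℝ × ℝ)] (fun P : ℝ × ℝ => ‖P‖ ^ n) := by
      apply ih (Dy h) (Dy_smooth h hh)
      intro i j hij
      rw [pd_Dy i j h]
      exact hz i (j+1) (by omega)
    rw [isLittleO_iff]
    intro c hc
    have hc2 : 0 < c / 2 := by linarith
    obtain ⟨δx, hδxpos, hδx⟩ := Metric.eventually_nhds_iff.mp ((isLittleO_iff.mp hox) hc2)
    obtain ⟨δy, hδypos, hδy⟩ := Metric.eventually_nhds_iff.mp ((isLittleO_iff.mp hoy) hc2)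
    rw [Metric.eventually_nhds_iff]
    refine ⟨min δx δy, by positivity, ?_⟩
    intro P hP
    rw [dist_zero_right] at hP
    -- fderiv bound on the closed ball of radius ‖P‖
    have hbound : ∀ Q ∈ Metric.closedBall (0 : ℝ × ℝ) ‖P‖,
        ‖fderiv ℝ h Q‖ ≤ c * ‖P‖ ^ n := by
      intro Q hQ
      rw [Metric.mem_closedBall, dist_zero_right] at hQ
      have hQx : ‖Dx h Q‖ ≤ c / 2 * ‖P‖ ^ n := by
        have hd : dist Q (0 : ℝ × ℝ) < δx := by
          rw [dist_zero_right]
          exact lt_of_le_of_lt hQ (lt_of_lt_of_le hP (min_le_left _ _))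
        calc ‖Dx h Q‖ ≤ c / 2 * ‖‖Q‖ ^ n‖ := hδx hd
          _ = c / 2 * ‖Q‖ ^ n := by rw [Real.norm_eq_abs, abs_of_nonneg (by positivity)]
          _ ≤ c / 2 * ‖P‖ ^ n := by
              apply mul_le_mul_of_nonneg_left _ hc2.le
              exact pow_le_pow_left₀ (norm_nonneg Q) hQ n
      have hQy : ‖Dy h Q‖ ≤ c / 2 * ‖P‖ ^ n := by
        have hd : dist Q (0 : ℝ × ℝ) < δy := by
          rw [dist_zero_right]
          exact lt_of_le_of_lt hQ (lt_of_lt_of_le hP (min_le_right _ _))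
        calc ‖Dy h Q‖ ≤ c / 2 * ‖‖Q‖ ^ n‖ := hδy hd
          _ = c / 2 * ‖Q‖ ^ n := by rw [Real.norm_eq_abs, abs_of_nonneg (by positivity)]
          _ ≤ c / 2 * ‖P‖ ^ n := by
              apply mul_le_mul_of_nonneg_left _ hc2.le
              exact pow_le_pow_left₀ (norm_nonneg Q) hQ n
      apply ContinuousLinearMap.opNorm_le_bound _ (by positivity)
      intro v
      have hv : v = v.1 • ((1 : ℝ), (0 : ℝ)) + v.2 • ((0 : ℝ), (1 : ℝ)) := by
        ext <;> simp
      have : fderiv ℝ h Q v = v.1 * Dx h Q + v.2 * Dy h Q := by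
        conv_lhs => rw [hv]
        rw [map_add, map_smul, map_smul]
        simp [Dx, Dy]
      rw [this]
      have hv1 : |v.1| ≤ ‖v‖ := by
        rw [← Real.norm_eq_abs]; exact norm_fst_le v
      have hv2 : |v.2| ≤ ‖v‖ := by
        rw [← Real.norm_eq_abs]; exact norm_snd_le v
      calc ‖v.1 * Dx h Q + v.2 * Dy h Q‖
          ≤ ‖v.1 * Dx h Q‖ + ‖v.2 * Dy h Q‖ := norm_add_le _ _
        _ = |v.1| * ‖Dx h Q‖ + |v.2| * ‖Dy h Q‖ := by
            simp [abs_mul, Real.norm_eq_abs]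
        _ ≤ ‖v‖ * (c / 2 * ‖P‖ ^ n) + ‖v‖ * (c / 2 * ‖P‖ ^ n) := by
            have := norm_nonneg (Dx h Q)
            have := norm_nonneg (Dy h Q)
            have := norm_nonneg v
            nlinarith [abs_nonneg v.1, abs_nonneg v.2]
        _ = c * ‖P‖ ^ n * ‖v‖ := by ring
    have hmvt := Convex.norm_image_sub_le_of_norm_fderiv_le
      (f := h) (C := c * ‖P‖ ^ n) (s := Metric.closedBall (0 : ℝ × ℝ) ‖P‖)
      (fun Q _ => hh.differentiable (by simp) Q) hbound
      (convex_closedBall _ _) (Metric.mem_closedBall_self (norm_nonneg P))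
      (by rw [Metric.mem_closedBall, dist_zero_right])
    rw [zero_pair] at h0
    rw [h0, sub_zero, sub_zero] at hmvt
    calc ‖h P‖ ≤ c * ‖P‖ ^ n * ‖P‖ := hmvt
      _ = c * ‖P‖ ^ (n + 1) := by ring
      _ = c * ‖‖P‖ ^ (n + 1)‖ := by
          rw [Real.norm_eq_abs, abs_of_nonneg (by positivity)]

lemma step_littleO (n : ℕ) (h : ℝ × ℝ → ℝ) (hh : ContDiff ℝ (⊤ : ℕ∞) h)
    (ho : h =o[nhds (0 : ℝ × ℝ)] (fun P : ℝ × ℝ => ‖P‖ ^ (n + 1))) :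
    (Dx h =o[nhds (0 : ℝ × ℝ)] (fun P : ℝ × ℝ => ‖P‖ ^ n)) ∧
    (Dy h =o[nhds (0 : ℝ × ℝ)] (fun P : ℝ × ℝ => ‖P‖ ^ n)) := by
  have hz := Avanish (n + 1) h hh ho
  constructor
  · apply Bsmall n (Dx h) (Dx_smooth h hh)
    intro i j hij
    rw [pd_Dx i j h hh]
    exact hz (i+1) j (by omega)
  · apply Bsmall n (Dy h) (Dy_smooth h hh)
    intro i j hij
    rw [pd_Dy i j h]
    exact hz i (j+1) (by omega)

lemma compute_Dx (u : ℝ × ℝ → ℝ) (hu : ContDiff ℝ (⊤ : ℕ∞) u) (w : ℝ × ℝ → ℝ)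
    (hw : ∀ x y : ℝ, HasDerivAt (fun s => u (s, y)) (w (x, y)) x) :
    Dx u = w := by
  funext P
  rw [← pdx_eq u hu]
  exact (hw P.1 P.2).deriv

lemma compute_Dy (u : ℝ × ℝ → ℝ) (hu : ContDiff ℝ (⊤ : ℕ∞) u) (w : ℝ × ℝ → ℝ)
    (hw : ∀ x y : ℝ, HasDerivAt (fun s => u (x, s)) (w (x, y)) y) :
    Dy u = w := by
  funext P
  rw [← pdy_eq u hu]
  exact (hw P.1 P.2).deriv

section polyderivs

variable (c31 c22 c13 c04 : ℝ)

noncomputable def poly : ℝ × ℝ → ℝ := fun P =>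
  P.2 ^ 2 + c31 * P.1 ^ 3 * P.2 + c22 * P.1 ^ 2 * P.2 ^ 2
    + c13 * P.1 * P.2 ^ 3 + c04 * P.2 ^ 4

noncomputable def q1 : ℝ × ℝ → ℝ := fun P =>
  3 * c31 * P.1 ^ 2 * P.2 + 2 * c22 * P.1 * P.2 ^ 2 + c13 * P.2 ^ 3
noncomputable def q2 : ℝ × ℝ → ℝ := fun P =>
  2 * P.2 + c31 * P.1 ^ 3 + 2 * c22 * P.1 ^ 2 * P.2 + 3 * c13 * P.1 * P.2 ^ 2
    + 4 * c04 * P.2 ^ 3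
noncomputable def qa : ℝ × ℝ → ℝ := fun P =>
  6 * c31 * P.1 * P.2 + 2 * c22 * P.2 ^ 2
noncomputable def qc : ℝ × ℝ → ℝ := fun P =>
  3 * c31 * P.1 ^ 2 + 4 * c22 * P.1 * P.2 + 3 * c13 * P.2 ^ 2
noncomputable def qb : ℝ × ℝ → ℝ := fun P =>
  2 + 2 * c22 * P.1 ^ 2 + 6 * c13 * P.1 * P.2 + 12 * c04 * P.2 ^ 2

lemma poly_smooth : ContDiff ℝ (⊤ : ℕ∞) (poly c31 c22 c13 c04) := by
  unfold poly
  fun_prop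

lemma q1_smooth : ContDiff ℝ (⊤ : ℕ∞) (q1 c31 c22 c13) := by
  unfold q1; fun_prop

lemma q2_smooth : ContDiff ℝ (⊤ : ℕ∞) (q2 c31 c22 c13 c04) := by
  unfold q2; fun_prop

lemma Dx_poly : Dx (poly c31 c22 c13 c04) = q1 c31 c22 c13 := by
  apply compute_Dx _ (poly_smooth c31 c22 c13 c04)
  intro x y
  have h : HasDerivAt (fun s : ℝ =>
      y ^ 2 + c31 * s ^ 3 * y + c22 * s ^ 2 * y ^ 2 + c13 * s * y ^ 3 + c04 * y ^ 4)
      (0 + c31 * (3 * x ^ 2) * y + c22 * (2 * x ^ 1) * y ^ 2 + c13 * 1 * y ^ 3 + 0) x := by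
    apply HasDerivAt.add
    apply HasDerivAt.add
    apply HasDerivAt.add
    apply HasDerivAt.add
    · exact hasDerivAt_const x (y ^ 2)
    · have := ((hasDerivAt_pow 3 x).const_mul c31).mul_const y
      exact this.congr_deriv (by push_cast; ring)
    · have := ((hasDerivAt_pow 2 x).const_mul c22).mul_const (y ^ 2)
      exact this.congr_deriv (by push_cast; ring)
    · have := ((hasDerivAt_id x).const_mul c13).mul_const (y ^ 3)
      exact this.congr_deriv (by ring)
    · exact hasDerivAt_const x (c04 * y ^ 4)
  have h2 : q1 c31 c22 c13 (x, y)
      = 0 + c31 * (3 * x ^ 2) * y + c22 * (2 * x ^ 1) * y ^ 2 + c13 * 1 * y ^ 3 + 0 := by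
    simp only [q1]; ring
  rw [h2]
  exact h

lemma Dy_poly : Dy (poly c31 c22 c13 c04) = q2 c31 c22 c13 c04 := by
  apply compute_Dy _ (poly_smooth c31 c22 c13 c04)
  intro x y
  have h : HasDerivAt (fun s : ℝ =>
      s ^ 2 + c31 * x ^ 3 * s + c22 * x ^ 2 * s ^ 2 + c13 * x * s ^ 3 + c04 * s ^ 4)
      (2 * y ^ 1 + c31 * x ^ 3 * 1 + c22 * x ^ 2 * (2 * y ^ 1) + c13 * x * (3 * y ^ 2)
        + c04 * (4 * y ^ 3)) y := by
    apply HasDerivAt.add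
    apply HasDerivAt.add
    apply HasDerivAt.add
    apply HasDerivAt.add
    · have := hasDerivAt_pow 2 y
      exact this.congr_deriv (by push_cast; ring)
    · have := (hasDerivAt_id y).const_mul (c31 * x ^ 3)
      exact this.congr_deriv (by ring)
    · have := (hasDerivAt_pow 2 y).const_mul (c22 * x ^ 2)
      exact this.congr_deriv (by push_cast; ring)
    · have := (hasDerivAt_pow 3 y).const_mul (c13 * x)
      exact this.congr_deriv (by push_cast; ring)
    · have := (hasDerivAt_pow 4 y).const_mul c04
      exact this.congr_deriv (by push_cast; ring)
  have h2 : q2 c31 c22 c13 c04 (x, y)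
      = 2 * y ^ 1 + c31 * x ^ 3 * 1 + c22 * x ^ 2 * (2 * y ^ 1) + c13 * x * (3 * y ^ 2)
        + c04 * (4 * y ^ 3) := by
    simp only [q2]; ring
  rw [h2]
  exact h

lemma Dx_q1 : Dx (q1 c31 c22 c13) = qa c31 c22 := by
  apply compute_Dx _ (q1_smooth c31 c22 c13)
  intro x y
  have h : HasDerivAt (fun s : ℝ =>
      3 * c31 * s ^ 2 * y + 2 * c22 * s * y ^ 2 + c13 * y ^ 3)
      (3 * c31 * (2 * x ^ 1) * y + 2 * c22 * 1 * y ^ 2 + 0) x := by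
    apply HasDerivAt.add
    apply HasDerivAt.add
    · have := ((hasDerivAt_pow 2 x).const_mul (3 * c31)).mul_const y
      exact this.congr_deriv (by push_cast; ring)
    · have := ((hasDerivAt_id x).const_mul (2 * c22)).mul_const (y ^ 2)
      exact this.congr_deriv (by ring)
    · exact hasDerivAt_const x (c13 * y ^ 3)
  have h2 : qa c31 c22 (x, y) = 3 * c31 * (2 * x ^ 1) * y + 2 * c22 * 1 * y ^ 2 + 0 := by
    simp only [qa]; ring
  rw [h2]
  exact h

lemma Dy_q1 : Dy (q1 c31 c22 c13) = qc c31 c22 c13 := by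
  apply compute_Dy _ (q1_smooth c31 c22 c13)
  intro x y
  have h : HasDerivAt (fun s : ℝ =>
      3 * c31 * x ^ 2 * s + 2 * c22 * x * s ^ 2 + c13 * s ^ 3)
      (3 * c31 * x ^ 2 * 1 + 2 * c22 * x * (2 * y ^ 1) + c13 * (3 * y ^ 2)) y := by
    apply HasDerivAt.add
    apply HasDerivAt.add
    · have := (hasDerivAt_id y).const_mul (3 * c31 * x ^ 2)
      exact this.congr_deriv (by ring)
    · have := (hasDerivAt_pow 2 y).const_mul (2 * c22 * x)
      exact this.congr_deriv (by push_cast; ring)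
    · have := (hasDerivAt_pow 3 y).const_mul c13
      exact this.congr_deriv (by push_cast; ring)
  have h2 : qc c31 c22 c13 (x, y)
      = 3 * c31 * x ^ 2 * 1 + 2 * c22 * x * (2 * y ^ 1) + c13 * (3 * y ^ 2) := by
    simp only [qc]; ring
  rw [h2]
  exact h

lemma Dy_q2 : Dy (q2 c31 c22 c13 c04) = qb c22 c13 c04 := by
  apply compute_Dy _ (q2_smooth c31 c22 c13 c04)
  intro x y
  have h : HasDerivAt (fun s : ℝ =>
      2 * s + c31 * x ^ 3 + 2 * c22 * x ^ 2 * s + 3 * c13 * x * s ^ 2 + 4 * c04 * s ^ 3)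
      (2 * 1 + 0 + 2 * c22 * x ^ 2 * 1 + 3 * c13 * x * (2 * y ^ 1)
        + 4 * c04 * (3 * y ^ 2)) y := by
    apply HasDerivAt.add
    apply HasDerivAt.add
    apply HasDerivAt.add
    apply HasDerivAt.add
    · have := (hasDerivAt_id y).const_mul 2
      exact this.congr_deriv (by ring)
    · exact hasDerivAt_const y (c31 * x ^ 3)
    · have := (hasDerivAt_id y).const_mul (2 * c22 * x ^ 2)
      exact this.congr_deriv (by ring)
    · have := (hasDerivAt_pow 2 y).const_mul (3 * c13 * x)
      exact this.congr_deriv (by push_cast; ring)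
    · have := (hasDerivAt_pow 3 y).const_mul (4 * c04)
      exact this.congr_deriv (by push_cast; ring)
  have h2 : qb c22 c13 c04 (x, y)
      = 2 * 1 + 0 + 2 * c22 * x ^ 2 * 1 + 3 * c13 * x * (2 * y ^ 1)
        + 4 * c04 * (3 * y ^ 2) := by
    simp only [qb]; ring
  rw [h2]
  exact h

end polyderivs

lemma Dx_add (u v : ℝ × ℝ → ℝ) (hu : ContDiff ℝ (⊤ : ℕ∞) u) (hv : ContDiff ℝ (⊤ : ℕ∞) v) :
    Dx (fun P => u P + v P) = fun P => Dx u P + Dx v P := by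
  funext P
  simp only [Dx]
  rw [fderiv_fun_add (hu.differentiable (by simp) P) (hv.differentiable (by simp) P)]
  simp

lemma Dy_add (u v : ℝ × ℝ → ℝ) (hu : ContDiff ℝ (⊤ : ℕ∞) u) (hv : ContDiff ℝ (⊤ : ℕ∞) v) :
    Dy (fun P => u P + v P) = fun P => Dy u P + Dy v P := by
  funext P
  simp only [Dy]
  rw [fderiv_fun_add (hu.differentiable (by simp) P) (hv.differentiable (by simp) P)]
  simp

lemma abs_mul3 (a x y X Y : ℝ) (hx : |x| ≤ X) (hy : |y| ≤ Y) :
    |a * x * y| ≤ |a| * X * Y := by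
  rw [abs_mul, abs_mul]
  have h1 : |a| * |x| ≤ |a| * X := mul_le_mul_of_nonneg_left hx (abs_nonneg a)
  have hX : 0 ≤ X := le_trans (abs_nonneg x) hx
  have hY : 0 ≤ Y := le_trans (abs_nonneg y) hy
  calc |a| * |x| * |y| ≤ |a| * X * |y| :=
        mul_le_mul_of_nonneg_right h1 (abs_nonneg y)
    _ ≤ |a| * X * Y := mul_le_mul_of_nonneg_left hy (by positivity)

lemma bigO_sq_of_bound (u : ℝ × ℝ → ℝ) (K : ℝ) (hb : ∀ P : ℝ × ℝ, |u P| ≤ K * ‖P‖ ^ 2) :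
    u =O[nhds (0 : ℝ × ℝ)] (fun P : ℝ × ℝ => ‖P‖ ^ 2) := by
  rw [isBigO_iff]
  refine ⟨K, Filter.Eventually.of_forall fun P => ?_⟩
  rw [Real.norm_eq_abs, Real.norm_eq_abs, abs_of_nonneg (by positivity : (0:ℝ) ≤ ‖P‖ ^ 2)]
  exact hb P

lemma absP1 (P : ℝ × ℝ) : |P.1| ≤ ‖P‖ := by
  rw [← Real.norm_eq_abs]; exact norm_fst_le P
lemma absP2 (P : ℝ × ℝ) : |P.2| ≤ ‖P‖ := by
  rw [← Real.norm_eq_abs]; exact norm_snd_le P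

lemma ho_sq_one : (fun P : ℝ × ℝ => ‖P‖ ^ 2) =o[nhds (0 : ℝ × ℝ)] (fun _ => (1 : ℝ)) := by
  rw [isLittleO_one_iff]
  have : Continuous (fun P : ℝ × ℝ => ‖P‖ ^ 2) := by continuity
  have := this.tendsto' (0 : ℝ × ℝ) 0 (by simp)
  exact this

lemma mulsq_lo : (fun P : ℝ × ℝ => ‖P‖ ^ 2 * ‖P‖ ^ 2)
    =o[nhds (0 : ℝ × ℝ)] (fun P : ℝ × ℝ => ‖P‖ ^ 2) := by
  have := (isBigO_refl (fun P : ℝ × ℝ => ‖P‖ ^ 2) (nhds (0 : ℝ × ℝ))).mul_isLittleO ho_sq_one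
  simpa using this

/-- for a surface `z = f(x,y)` with 4-jet
`y² + c₃₁x³y + c₂₂x²y² + c₁₃xy³ + c₀₄y⁴` (class `Π^p_{v,3}`), the Hessian
determinant satisfies `H = 12c₃₁xy + 4c₂₂y² + o(‖(x,y)‖²)`; its quadratic part has
discriminant `144c₃₁²`, so it is a nondegenerate (indefinite) quadratic form — i.e.
the parabolic curve has a Morse singularity at the origin — iff `c₃₁ ≠ 0`. -/
theorem stmt19 (c31 c22 c13 c04 : ℝ) (f : ℝ × ℝ → ℝ) (hf : ContDiff ℝ (⊤ : ℕ∞) f)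
    (hT : (fun P : ℝ × ℝ =>
        f P - (P.2 ^ 2 + c31 * P.1 ^ 3 * P.2 + c22 * P.1 ^ 2 * P.2 ^ 2
          + c13 * P.1 * P.2 ^ 3 + c04 * P.2 ^ 4))
      =o[nhds (0 : ℝ × ℝ)] (fun P : ℝ × ℝ => ‖P‖ ^ 4)) :
    let H : ℝ × ℝ → ℝ := fun P => pdx (pdx f) P * pdy (pdy f) P - (pdy (pdx f) P) ^ 2
    ((fun P : ℝ × ℝ =>
        H P - (12 * c31 * P.1 * P.2 + 4 * c22 * P.2 ^ 2))
      =o[nhds (0 : ℝ × ℝ)] (fun P : ℝ × ℝ => ‖P‖ ^ 2)) ∧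
    (12 * c31) ^ 2 - 4 * 0 * (4 * c22) = 144 * c31 ^ 2 ∧
    ((12 * c31) ^ 2 - 4 * 0 * (4 * c22) ≠ 0 ↔ c31 ≠ 0) := by
  intro H
  refine ⟨?_, by ring, ?_⟩
  · -- the asymptotic statement
    set g : ℝ × ℝ → ℝ := fun P => f P - poly c31 c22 c13 c04 P with hgdef
    have hps := poly_smooth c31 c22 c13 c04
    have hgs : ContDiff ℝ (⊤ : ℕ∞) g := hf.sub hps
    have hgo : g =o[nhds (0 : ℝ × ℝ)] (fun P : ℝ × ℝ => ‖P‖ ^ 4) := hT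
    have h3 := step_littleO 3 g hgs (by simpa using hgo)
    have h2x := step_littleO 2 (Dx g) (Dx_smooth g hgs) (by simpa using h3.1)
    have h2y := step_littleO 2 (Dy g) (Dy_smooth g hgs) (by simpa using h3.2)
    have r1lo := h2x.1
    have r3lo := h2x.2
    have r2lo := h2y.2
    -- o(1) versions
    have hsqO1 : (fun P : ℝ × ℝ => ‖P‖ ^ 2) =O[nhds (0 : ℝ × ℝ)] (fun _ => (1 : ℝ)) :=
      ho_sq_one.isBigO
    have r1o1 := r1lo.trans_isBigO hsqO1
    have r2o1 := r2lo.trans_isBigO hsqO1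
    have r3o1 := r3lo.trans_isBigO hsqO1
    -- big-O bounds for the explicit quadratics
    have haO : (qa c31 c22) =O[nhds (0 : ℝ × ℝ)] (fun P : ℝ × ℝ => ‖P‖ ^ 2) := by
      apply bigO_sq_of_bound _ (|6 * c31| + |2 * c22|)
      intro P
      have e : qa c31 c22 P = (6 * c31) * P.1 * P.2 + (2 * c22) * P.2 * P.2 := by
        simp only [qa]; ring
      rw [e]
      have b1 := abs_mul3 (6 * c31) P.1 P.2 ‖P‖ ‖P‖ (absP1 P) (absP2 P)
      have b2 := abs_mul3 (2 * c22) P.2 P.2 ‖P‖ ‖P‖ (absP2 P) (absP2 P)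
      calc |(6 * c31) * P.1 * P.2 + (2 * c22) * P.2 * P.2|
          ≤ |(6 * c31) * P.1 * P.2| + |(2 * c22) * P.2 * P.2| := abs_add_le _ _
        _ ≤ |6 * c31| * ‖P‖ * ‖P‖ + |2 * c22| * ‖P‖ * ‖P‖ := add_le_add b1 b2
        _ = (|6 * c31| + |2 * c22|) * ‖P‖ ^ 2 := by ring
    have hcO : (qc c31 c22 c13) =O[nhds (0 : ℝ × ℝ)] (fun P : ℝ × ℝ => ‖P‖ ^ 2) := by
      apply bigO_sq_of_bound _ (|3 * c31| + |4 * c22| + |3 * c13|)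
      intro P
      have e : qc c31 c22 c13 P = (3 * c31) * P.1 * P.1 + (4 * c22) * P.1 * P.2
          + (3 * c13) * P.2 * P.2 := by
        simp only [qc]; ring
      rw [e]
      have b1 := abs_mul3 (3 * c31) P.1 P.1 ‖P‖ ‖P‖ (absP1 P) (absP1 P)
      have b2 := abs_mul3 (4 * c22) P.1 P.2 ‖P‖ ‖P‖ (absP1 P) (absP2 P)
      have b3 := abs_mul3 (3 * c13) P.2 P.2 ‖P‖ ‖P‖ (absP2 P) (absP2 P)
      calc |(3 * c31) * P.1 * P.1 + (4 * c22) * P.1 * P.2 + (3 * c13) * P.2 * P.2|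
          ≤ |(3 * c31) * P.1 * P.1 + (4 * c22) * P.1 * P.2|
            + |(3 * c13) * P.2 * P.2| := abs_add_le _ _
        _ ≤ |(3 * c31) * P.1 * P.1| + |(4 * c22) * P.1 * P.2|
            + |(3 * c13) * P.2 * P.2| := by
              have := abs_add_le ((3 * c31) * P.1 * P.1) ((4 * c22) * P.1 * P.2)
              linarith
        _ ≤ |3 * c31| * ‖P‖ * ‖P‖ + |4 * c22| * ‖P‖ * ‖P‖ + |3 * c13| * ‖P‖ * ‖P‖ := by
              linarith
        _ = (|3 * c31| + |4 * c22| + |3 * c13|) * ‖P‖ ^ 2 := by ring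
    have hb2O : (fun P : ℝ × ℝ => qb c22 c13 c04 P - 2)
        =O[nhds (0 : ℝ × ℝ)] (fun P : ℝ × ℝ => ‖P‖ ^ 2) := by
      apply bigO_sq_of_bound _ (|2 * c22| + |6 * c13| + |12 * c04|)
      intro P
      have e : qb c22 c13 c04 P - 2 = (2 * c22) * P.1 * P.1 + (6 * c13) * P.1 * P.2
          + (12 * c04) * P.2 * P.2 := by
        simp only [qb]; ring
      rw [e]
      have b1 := abs_mul3 (2 * c22) P.1 P.1 ‖P‖ ‖P‖ (absP1 P) (absP1 P)
      have b2 := abs_mul3 (6 * c13) P.1 P.2 ‖P‖ ‖P‖ (absP1 P) (absP2 P)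
      have b3 := abs_mul3 (12 * c04) P.2 P.2 ‖P‖ ‖P‖ (absP2 P) (absP2 P)
      calc |(2 * c22) * P.1 * P.1 + (6 * c13) * P.1 * P.2 + (12 * c04) * P.2 * P.2|
          ≤ |(2 * c22) * P.1 * P.1 + (6 * c13) * P.1 * P.2|
            + |(12 * c04) * P.2 * P.2| := abs_add_le _ _
        _ ≤ |(2 * c22) * P.1 * P.1| + |(6 * c13) * P.1 * P.2|
            + |(12 * c04) * P.2 * P.2| := by
              have := abs_add_le ((2 * c22) * P.1 * P.1) ((6 * c13) * P.1 * P.2)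
              linarith
        _ ≤ |2 * c22| * ‖P‖ * ‖P‖ + |6 * c13| * ‖P‖ * ‖P‖ + |12 * c04| * ‖P‖ * ‖P‖ := by
              linarith
        _ = (|2 * c22| + |6 * c13| + |12 * c04|) * ‖P‖ ^ 2 := by ring
    have hbO1 : (qb c22 c13 c04) =O[nhds (0 : ℝ × ℝ)] (fun _ => (1 : ℝ)) := by
      have h2O1 : (fun _ : ℝ × ℝ => (2 : ℝ)) =O[nhds (0 : ℝ × ℝ)] (fun _ => (1 : ℝ)) :=
        isBigO_const_const 2 one_ne_zero _
      have := (hb2O.trans hsqO1).add h2O1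
      simpa using this
    -- the seven little-o terms
    have t1 := (haO.mul hb2O).trans_isLittleO mulsq_lo
    have t2 : (fun P => qa c31 c22 P * Dy (Dy g) P)
        =o[nhds (0 : ℝ × ℝ)] (fun P : ℝ × ℝ => ‖P‖ ^ 2) := by
      have := haO.mul_isLittleO r2o1
      simpa using this
    have t3 : (fun P => Dx (Dx g) P * qb c22 c13 c04 P)
        =o[nhds (0 : ℝ × ℝ)] (fun P : ℝ × ℝ => ‖P‖ ^ 2) := by
      have := r1lo.mul_isBigO hbO1
      simpa using this
    have t4 : (fun P => Dx (Dx g) P * Dy (Dy g) P)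
        =o[nhds (0 : ℝ × ℝ)] (fun P : ℝ × ℝ => ‖P‖ ^ 2) := by
      have := r1lo.mul_isBigO r2o1.isBigO
      simpa using this
    have t5 := (hcO.mul hcO).trans_isLittleO mulsq_lo
    have t6 : (fun P => 2 * qc c31 c22 c13 P * Dy (Dx g) P)
        =o[nhds (0 : ℝ × ℝ)] (fun P : ℝ × ℝ => ‖P‖ ^ 2) := by
      have hc2 : (fun P => 2 * qc c31 c22 c13 P)
          =O[nhds (0 : ℝ × ℝ)] (fun P : ℝ × ℝ => ‖P‖ ^ 2) := hcO.const_mul_left 2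
      have := hc2.mul_isLittleO r3o1
      simpa [mul_assoc] using this
    have t7 : (fun P => Dy (Dx g) P * Dy (Dx g) P)
        =o[nhds (0 : ℝ × ℝ)] (fun P : ℝ × ℝ => ‖P‖ ^ 2) := by
      have := r3lo.mul_isBigO r3o1.isBigO
      simpa using this
    have key := ((((t1.add t2).add t3).add t4).sub ((t5.add t6).add t7))
    -- derivative identities
    have hfe : f = fun P => poly c31 c22 c13 c04 P + g P := by
      funext P; simp only [hgdef]; ring
    have hDxf : Dx f = fun P => q1 c31 c22 c13 P + Dx g P := by
      conv_lhs => rw [hfe]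
      rw [Dx_add _ _ hps hgs, Dx_poly]
    have hDyf : Dy f = fun P => q2 c31 c22 c13 c04 P + Dy g P := by
      conv_lhs => rw [hfe]
      rw [Dy_add _ _ hps hgs, Dy_poly]
    have hA : Dx (Dx f) = fun P => qa c31 c22 P + Dx (Dx g) P := by
      rw [hDxf, Dx_add _ _ (q1_smooth c31 c22 c13) (Dx_smooth g hgs), Dx_q1]
    have hC : Dy (Dx f) = fun P => qc c31 c22 c13 P + Dy (Dx g) P := by
      rw [hDxf, Dy_add _ _ (q1_smooth c31 c22 c13) (Dx_smooth g hgs), Dy_q1]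
    have hB : Dy (Dy f) = fun P => qb c22 c13 c04 P + Dy (Dy g) P := by
      rw [hDyf, Dy_add _ _ (q2_smooth c31 c22 c13 c04) (Dy_smooth g hgs), Dy_q2]
    have e1 : pdx (pdx f) = Dx (Dx f) := by
      rw [pdx_eq f hf, pdx_eq (Dx f) (Dx_smooth f hf)]
    have e2 : pdy (pdx f) = Dy (Dx f) := by
      rw [pdx_eq f hf, pdy_eq (Dx f) (Dx_smooth f hf)]
    have e3 : pdy (pdy f) = Dy (Dy f) := by
      rw [pdy_eq f hf, pdy_eq (Dy f) (Dy_smooth f hf)]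
    have hfun : (fun P : ℝ × ℝ => H P - (12 * c31 * P.1 * P.2 + 4 * c22 * P.2 ^ 2))
        = fun P => (qa c31 c22 P * (qb c22 c13 c04 P - 2) + qa c31 c22 P * Dy (Dy g) P
            + Dx (Dx g) P * qb c22 c13 c04 P + Dx (Dx g) P * Dy (Dy g) P)
          - (qc c31 c22 c13 P * qc c31 c22 c13 P + 2 * qc c31 c22 c13 P * Dy (Dx g) P
            + Dy (Dx g) P * Dy (Dx g) P) := by
      funext P
      show pdx (pdx f) P * pdy (pdy f) P - (pdy (pdx f) P) ^ 2
          - (12 * c31 * P.1 * P.2 + 4 * c22 * P.2 ^ 2) = _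
      rw [e1, e2, e3, hA, hB, hC]
      simp only [qa]
      ring
    rw [hfun]
    exact key
  · have hd : (12 * c31) ^ 2 - 4 * 0 * (4 * c22) = 144 * c31 ^ 2 := by ring
    rw [hd]
    constructor
    · intro h hc
      apply h; rw [hc]; ring
    · intro h hc
      apply h
      have h2 : c31 ^ 2 = 0 := by linarith
      exact pow_eq_zero_iff (by norm_num) |>.mp h2
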